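/- arXiv:1212.4477 — 4 statements merged into one kernel-verified Lean document; each statement's English description precedes it below -/
import Mathlib

section
/- For holomorphic functions φ₁,…,φₙ on an open set U ⊆ ℂ which is star-shaped with respect to 0, the n-fold convolution product (φ₁ * ⋯ * φₙ)(ζ) = ∫₀^ζ dζ₁ ∫₀^{ζ-ζ₁} dζ₂ ⋯ ∫₀^{ζ-(ζ₁+⋯+ζ_{n-2})} dζ_{n-1} φ₁(ζ₁)⋯φ_{n-1}(ζ_{n-1}) φₙ(ζ-(ζ₁+⋯+ζ_{n-1})) satisfies the bound |φ₁*⋯*φₙ(ζ)| ≤ (|ζ|^{n-1}/(n-1)!) · max_{[0,ζ]}|φ₁| ⋯ max_{[0,ζ]}|φₙ| for every ζ ∈ U. -/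
open MeasureTheory intervalIntegral

/-- Convolution of two functions along the segment `[0, ζ]`:
`(f * g)(ζ) = ∫₀^ζ f(ζ₁) g(ζ - ζ₁) dζ₁`, parametrized by `ζ₁ = t ζ`, `t ∈ [0,1]`. -/
noncomputable def segConv (f g : ℂ → ℂ) : ℂ → ℂ :=
  fun ζ => ζ * ∫ t in (0:ℝ)..1, f ((t : ℂ) * ζ) * g (ζ - (t : ℂ) * ζ)

/-- Iterated (n+1)-fold convolution `φ₀ * φ₁ * ⋯ * φₙ`. -/
noncomputable def iterConv : (n : ℕ) → (Fin (n + 1) → ℂ → ℂ) → ℂ → ℂ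
  | 0, φ => φ 0
  | n + 1, φ => segConv (φ 0) (iterConv n (fun i => φ i.succ))

/-!
Each convolution is an integral over a segment of length `|ζ|`; bounding every factor by its
maximum on `[0, ζ]`, induction on `n` reduces the estimate to `∫₀¹ (1 - t)ⁿ dt = 1 / (n + 1)`,
which produces the factorial.
-/

theorem integral_one_sub_pow (n : ℕ) : ∫ t in (0:ℝ)..1, (1 - t) ^ n = 1 / (n + 1) := by
  simp [intervalIntegral.integral_comp_sub_left (fun t : ℝ => t ^ n), integral_pow]

theorem norm_segConv_le {f g : ℂ → ℂ} {w : ℂ} {C : ℝ} (n : ℕ)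
    (h : ∀ t ∈ Set.Icc (0:ℝ) 1, ‖f (t * w)‖ * ‖g ((1 - t : ℝ) * w)‖ ≤ C * (1 - t) ^ n) :
    ‖segConv f g w‖ ≤ ‖w‖ * (C / (n + 1)) := by
  have hint : ‖∫ t in (0:ℝ)..1, f (t * w) * g (w - t * w)‖ ≤ C / (n + 1) := by
    calc _ ≤ ∫ t in (0:ℝ)..1, C * (1 - t) ^ n := by
          refine norm_integral_le_of_norm_le zero_le_one (ae_of_all _ fun t ht => ?_)
            ((by fun_prop : Continuous fun t : ℝ => C * (1 - t) ^ n).intervalIntegrable _ _)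
          have hw : w - t * w = (1 - t : ℝ) * w := by push_cast; ring
          rw [norm_mul, hw]
          exact h t (Set.Ioc_subset_Icc_self ht)
      _ = C / (n + 1) := by
          rw [intervalIntegral.integral_const_mul, integral_one_sub_pow, mul_one_div]
  rw [segConv, norm_mul]
  exact mul_le_mul_of_nonneg_left hint (norm_nonneg w)

theorem norm_iterConv_le_of_starConvex {S : Set ℂ} (hS : StarConvex ℝ 0 S) :
    ∀ (n : ℕ) (φ : Fin (n + 1) → ℂ → ℂ) (M : Fin (n + 1) → ℝ),
      (∀ j, ∀ w ∈ S, ‖φ j w‖ ≤ M j) →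
      ∀ w ∈ S, ‖iterConv n φ w‖ ≤ ‖w‖ ^ n / n.factorial * ∏ j, M j
  | 0, φ, M, hM, w, hw => by simpa [iterConv] using hM 0 w hw
  | n + 1, φ, M, hM, w, hw => by
    have hscale : ∀ t ∈ Set.Icc (0:ℝ) 1, (t : ℂ) * w ∈ S := fun t ht => by
      simpa only [Complex.real_smul] using hS.smul_mem hw ht.1 ht.2
    have hM0 : 0 ≤ M 0 := (norm_nonneg _).trans (by simpa using hM 0 _ (hscale 0 (by simp)))
    have ih := norm_iterConv_le_of_starConvex hS n (fun i => φ i.succ) (fun i => M i.succ)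
      (fun j => hM j.succ)
    have hstep := norm_segConv_le (f := φ 0) (g := iterConv n fun i => φ i.succ) (w := w)
      (C := M 0 * (‖w‖ ^ n / n.factorial * ∏ j : Fin (n + 1), M j.succ)) n fun t ht => by
        have h1t : 1 - t ∈ Set.Icc (0:ℝ) 1 := ⟨by linarith [ht.2], by linarith [ht.1]⟩
        calc _ ≤ M 0 * (‖((1 - t : ℝ) : ℂ) * w‖ ^ n / n.factorial * ∏ j : Fin (n + 1), M j.succ) :=
              mul_le_mul (hM 0 _ (hscale t ht)) (ih _ (hscale _ h1t)) (norm_nonneg _) hM0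
          _ = _ := by
              rw [norm_mul, Complex.norm_real, Real.norm_of_nonneg h1t.1, mul_pow]
              ring
    calc ‖iterConv (n + 1) φ w‖
        ≤ ‖w‖ * (M 0 * (‖w‖ ^ n / n.factorial * ∏ j : Fin (n + 1), M j.succ) / (n + 1)) := hstep
      _ = ‖w‖ ^ (n + 1) / (n + 1).factorial * ∏ j, M j := by
          rw [Fin.prod_univ_succ M, Nat.factorial_succ]
          push_cast
          field_simp
          ring

theorem convolution_bound_starshaped_general
    (n : ℕ) (φ : Fin (n + 1) → ℂ → ℂ)
    (ζ : ℂ) (M : Fin (n + 1) → ℝ)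
    (hM : ∀ j, ∀ t : ℝ, t ∈ Set.Icc (0:ℝ) 1 → ‖φ j ((t : ℂ) * ζ)‖ ≤ M j) :
    ‖iterConv n φ ζ‖ ≤ ‖ζ‖ ^ n / n.factorial * ∏ j, M j := by
  have hseg : segment ℝ 0 ζ = (fun t : ℝ => (t : ℂ) * ζ) '' Set.Icc 0 1 := by
    simp only [segment_eq_image, smul_zero, zero_add, Complex.real_smul]
  have hM' : ∀ j, ∀ w ∈ segment ℝ 0 ζ, ‖φ j w‖ ≤ M j := by
    rw [hseg]
    rintro j _ ⟨t, ht, rfl⟩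
    exact hM j t ht
  exact norm_iterConv_le_of_starConvex ((convex_segment 0 ζ).starConvex (left_mem_segment ℝ 0 ζ))
    n φ M hM' ζ (right_mem_segment ℝ 0 ζ)

/-- Bound for the n-fold convolution product of holomorphic functions on a star-shaped
open set `U`: `|φ₁*⋯*φₙ(ζ)| ≤ |ζ|^{n-1}/(n-1)! ⋅ ∏ max_{[0,ζ]}|φⱼ|`. -/
theorem convolution_bound_starshaped (U : Set ℂ) (hU : IsOpen U)
    (hstar : ∀ ζ ∈ U, ∀ t : ℝ, t ∈ Set.Icc (0:ℝ) 1 → (t : ℂ) * ζ ∈ U)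
    (n : ℕ) (φ : Fin (n + 1) → ℂ → ℂ)
    (hφ : ∀ j, DifferentiableOn ℂ (φ j) U)
    (ζ : ℂ) (hζ : ζ ∈ U) (M : Fin (n + 1) → ℝ)
    (hM : ∀ j, ∀ t : ℝ, t ∈ Set.Icc (0:ℝ) 1 → ‖φ j ((t : ℂ) * ζ)‖ ≤ M j) :
    ‖iterConv n φ ζ‖ ≤ ‖ζ‖ ^ n / n.factorial * ∏ j, M j :=
  convolution_bound_starshaped_general n φ ζ M hM
end

section
/- Let f̃(z) = z + φ̃(z) and g̃(z) = z + ψ̃(z) with φ̃, ψ̃ ∈ ℂ[[z⁻¹]]. Then the composition f̃ ∘ g̃ = g̃ + φ̃ ∘ g̃ is well-defined in z + ℂ[[z⁻¹]], where φ̃ ∘ g̃ := φ̃ + Σ_{n≥1} (1/n!) ψ̃ⁿ (d/dz)ⁿ φ̃ is a formally convergent series, and (z + ℂ[[z⁻¹]], ∘) is a group. -/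
open PowerSeries

/-- The derivation `d/dz` on `ℂ[[z⁻¹]]`, with `X` standing for `z⁻¹`:
`(d/dz) X^m = −m X^{m+1}`, i.e. `d/dz = −X² d/dX`. -/
noncomputable def Dz : PowerSeries ℂ → PowerSeries ℂ :=
  fun f => -(PowerSeries.X ^ 2 * PowerSeries.derivativeFun f)

/-- The sum of a formally summable family: when the orders of `F k` grow at
least linearly in `k`, the coefficient of degree `m` receives contributions
only from `k ≤ m`, so this is the formal sum `Σₖ F k`. -/
noncomputable def formalSum (F : ℕ → PowerSeries ℂ) : PowerSeries ℂ :=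
  PowerSeries.mk fun m => ∑ k ∈ Finset.range (m + 1), PowerSeries.coeff m (F k)

/-- The `ℂ[[z⁻¹]]`-part of the composition `(z + φ) ∘ (z + ψ)` of formal
tangent-to-identity diffeomorphisms at `∞`:
`compPart φ ψ = ψ + Σ_{n≥0} (1/n!) ψⁿ (d/dz)ⁿ φ`, a formally convergent series,
so that `(f̃ ∘ g̃)(z) = z + compPart φ ψ` for `f̃ = z + φ`, `g̃ = z + ψ`. -/
noncomputable def compPart (φ ψ : PowerSeries ℂ) : PowerSeries ℂ :=
  ψ + formalSum fun n => ((n.factorial : ℂ))⁻¹ • (ψ ^ n * Dz^[n] φ)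

/-! Read in the coordinate `X = z⁻¹`, the map `z + ψ` becomes the series
`conjRecip ψ = X / (1 + X ψ)`, tangent to the identity at `0`. Taylor's formula says that
`φ ↦ Σ ψⁿ/n! (d/dz)ⁿ φ` is the substitution of `conjRecip ψ` into `φ`: both are `X`-adically
continuous `ℂ`-algebra endomorphisms of `ℂ⟦X⟧` (the Taylor sum is multiplicative by the Leibniz rule
and the Cauchy product of formal sums) and both send `X = 1/z` to `1/(z + ψ)`. Hence `conjRecip`
carries `compPart` to substitution of power series, which is associative with unit `X`, and every
series `X + O(X²)` has a compositional inverse. -/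

open Finset

theorem Derivation.iterate_mul {R A : Type*} [CommSemiring R] [CommSemiring A] [Algebra R A]
    (D : Derivation R A A) (n : ℕ) (a b : A) :
    D^[n] (a * b) = ∑ ij ∈ antidiagonal n, n.choose ij.1 • (D^[ij.1] a * D^[ij.2] b) := by
  induction n with
  | zero => simp
  | succ n ih =>
    rw [sum_antidiagonal_choose_succ_nsmul (fun i j => D^[i] a * D^[j] b) n]
    simp only [Function.iterate_succ_apply', ih, map_sum, map_nsmul, Derivation.leibniz,
      smul_eq_mul, nsmul_add, sum_add_distrib]
    refine congrArg _ (sum_congr rfl fun ⟨i, j⟩ hij => ?_)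
    rw [n.choose_symm_of_eq_add (mem_antidiagonal.1 hij).symm, mul_comm]

theorem PowerSeries.eq_of_forall_X_pow_dvd_sub {R : Type*} [CommRing R] {f g : R⟦X⟧}
    (h : ∀ N, X ^ N ∣ f - g) : f = g := by
  ext m
  rw [← sub_eq_zero, ← map_sub]
  exact X_pow_dvd_iff.1 (h (m + 1)) m (Nat.lt_succ_self m)

theorem PowerSeries.algHom_ext_of_X_pow_dvd {R : Type*} [CommRing R] {F G : R⟦X⟧ →ₐ[R] R⟦X⟧}
    (hF : ∀ k f, X ^ k ∣ f → X ^ k ∣ F f) (hG : ∀ k f, X ^ k ∣ f → X ^ k ∣ G f)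
    (hX : F X = G X) : F = G := by
  have hpoly : F.comp (Polynomial.coeToPowerSeries.algHom R) =
      G.comp (Polynomial.coeToPowerSeries.algHom R) :=
    Polynomial.algHom_ext (by simpa [Polynomial.coeToPowerSeries.algHom_apply] using hX)
  -- `F` and `G` agree on polynomials, and `f` is a polynomial modulo `X ^ N`.
  refine AlgHom.ext fun f => eq_of_forall_X_pow_dvd_sub fun N => ?_
  have htrunc := AlgHom.congr_fun hpoly (trunc N f)
  simp only [AlgHom.comp_apply, Polynomial.coeToPowerSeries.algHom_apply,
    Algebra.algebraMap_self, map_id, id] at htrunc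
  rw [eq_X_pow_mul_shift_add_trunc N f, map_add, map_add, htrunc, add_sub_add_right_eq_sub]
  exact dvd_sub (hF _ _ (dvd_mul_right _ _)) (hG _ _ (dvd_mul_right _ _))

lemma PowerSeries.X_pow_dvd_subst {R : Type*} [CommRing R] {w : R⟦X⟧} (hw : X ∣ w) {k : ℕ}
    {f : R⟦X⟧} (hf : X ^ k ∣ f) : X ^ k ∣ f.subst w := by
  have hs : HasSubst w := HasSubst.of_constantCoeff_zero' (X_dvd_iff.1 hw)
  obtain ⟨g, rfl⟩ := hf
  rw [subst_mul hs, subst_pow hs, subst_X hs]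
  exact (pow_dvd_pow_of_dvd hw k).mul_right _

section FormalSum

variable {F G : ℕ → PowerSeries ℂ}

lemma formalSum_add : formalSum (F + G) = formalSum F + formalSum G := by
  ext m
  simp [formalSum, sum_add_distrib]

lemma formalSum_smul (c : ℂ) : formalSum (c • F) = c • formalSum F := by
  ext m
  simp [formalSum, mul_sum]

lemma formalSum_single (f : ℂ⟦X⟧) : formalSum (Pi.single 0 f) = f := by
  ext m
  simp [formalSum, Pi.single_apply, apply_ite (coeff m)]

lemma X_pow_dvd_formalSum {k : ℕ} (h : ∀ n, X ^ k ∣ F n) : X ^ k ∣ formalSum F := by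
  refine X_pow_dvd_iff.2 fun m hm => ?_
  simp [formalSum, fun n => X_pow_dvd_iff.1 (h n) m hm]

lemma X_pow_dvd_formalSum_sub_sum (hF : ∀ n, X ^ n ∣ F n) (N : ℕ) :
    X ^ N ∣ formalSum F - ∑ n ∈ range N, F n := by
  refine X_pow_dvd_iff.2 fun m hm => ?_
  rw [map_sub, map_sum, formalSum, coeff_mk, sub_eq_zero]
  refine sum_subset (range_subset_range.2 hm) fun n hnN hnm => ?_
  exact X_pow_dvd_iff.1 (hF n) m (by simp_all)

lemma eq_formalSum_iff (hF : ∀ n, X ^ n ∣ F n) {f : PowerSeries ℂ} :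
    f = formalSum F ↔ ∀ N, X ^ N ∣ f - ∑ n ∈ range N, F n := by
  refine ⟨fun h => h ▸ X_pow_dvd_formalSum_sub_sum hF, fun h => ?_⟩
  refine eq_of_forall_X_pow_dvd_sub fun N => ?_
  simpa using dvd_sub (h N) (X_pow_dvd_formalSum_sub_sum hF N)

lemma formalSum_mul_formalSum (hF : ∀ n, X ^ n ∣ F n) (hG : ∀ n, X ^ n ∣ G n) :
    formalSum F * formalSum G =
      formalSum fun n => ∑ ij ∈ antidiagonal n, F ij.1 * G ij.2 := by
  have hFG (i j : ℕ) : X ^ (i + j) ∣ F i * G j := by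
    rw [pow_add]; exact mul_dvd_mul (hF i) (hG j)
  refine (eq_formalSum_iff fun n => dvd_sum fun ij hij => ?_).2 fun N => ?_
  · exact mem_antidiagonal.1 hij ▸ hFG ij.1 ij.2
  obtain ⟨a, ha⟩ := X_pow_dvd_formalSum_sub_sum hF N
  obtain ⟨b, hb⟩ := X_pow_dvd_formalSum_sub_sum hG N
  rw [sub_eq_iff_eq_add] at ha hb
  have htail : X ^ N ∣ (∑ i ∈ range N, F i) * (∑ j ∈ range N, G j) -
      ∑ n ∈ range N, ∑ ij ∈ antidiagonal n, F ij.1 * G ij.2 := by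
    simp only [Nat.sum_antidiagonal_eq_sum_range_succ (fun i j => F i * G j),
      sum_range_diag_flip N (fun i j => F i * G j), sum_mul_sum, ← sum_sub_distrib]
    refine dvd_sum fun i hi => ?_
    rw [← sum_Ico_eq_sub _ (Nat.sub_le N i)]
    refine dvd_sum fun j hj => (pow_dvd_pow X ?_).trans (hFG i j)
    simp only [mem_Ico] at hj
    omega
  obtain ⟨c, hc⟩ := htail
  exact ⟨a * ∑ j ∈ range N, G j + (∑ i ∈ range N, F i) * b + X ^ N * a * b + c, by
    rw [ha, hb]; linear_combination hc⟩

lemma one_sub_mul_formalSum_mul_pow {a : PowerSeries ℂ} (ha : X ∣ a) (b : PowerSeries ℂ) :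
    (1 - a) * formalSum (fun n => b * a ^ n) = b := by
  have hpow (n : ℕ) : X ^ n ∣ a ^ n := pow_dvd_pow_of_dvd ha n
  refine eq_of_forall_X_pow_dvd_sub fun N => ?_
  obtain ⟨c, hc⟩ := X_pow_dvd_formalSum_sub_sum (fun n => (hpow n).mul_left b) N
  obtain ⟨d, hd⟩ := hpow N
  rw [sub_eq_iff_eq_add, ← mul_sum, mul_comm b] at hc
  exact ⟨(1 - a) * c - b * d, by
    rw [hc]; linear_combination b * mul_neg_geom_sum a N - b * hd⟩

end FormalSum

noncomputable def dz : Derivation ℂ ℂ⟦X⟧ ℂ⟦X⟧ := -(X ^ 2 : ℂ⟦X⟧) • derivative ℂ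

lemma coe_dz : ⇑dz = Dz := by
  funext f
  simp only [dz, Derivation.smul_apply, smul_eq_mul, neg_mul]
  rfl

lemma Dz_X : Dz X = -X ^ 2 := by
  simp [← coe_dz, dz]

lemma X_dvd_Dz (f : ℂ⟦X⟧) : X ∣ Dz f := by
  rw [← coe_dz, dz, Derivation.smul_apply, smul_eq_mul]
  exact (dvd_neg.2 (dvd_pow_self X two_ne_zero)).mul_right _

lemma X_pow_succ_dvd_Dz {k : ℕ} {f : ℂ⟦X⟧} (h : X ^ k ∣ f) : X ^ (k + 1) ∣ Dz f := by
  obtain ⟨g, rfl⟩ := h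
  rw [← coe_dz, Derivation.leibniz, Derivation.leibniz_pow, coe_dz, Dz_X]
  refine dvd_add ?_ ?_
  · rw [smul_eq_mul, pow_succ]; exact mul_dvd_mul_left _ (X_dvd_Dz g)
  · simp only [smul_eq_mul, nsmul_eq_mul, mul_neg, ← pow_add, dvd_neg]
    exact ((pow_dvd_pow X (by omega)).mul_left _).mul_left _

lemma X_pow_add_dvd_Dz_iterate {k : ℕ} {f : ℂ⟦X⟧} (h : X ^ k ∣ f) (n : ℕ) :
    X ^ (k + n) ∣ Dz^[n] f := by
  induction n with
  | zero => exact h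
  | succ n ih => rw [Function.iterate_succ_apply']; exact X_pow_succ_dvd_Dz ih

lemma Dz_iterate_X (n : ℕ) : Dz^[n] X = ((-1) ^ n * n.factorial : ℂ) • X ^ (n + 1) := by
  induction n with
  | zero => simp
  | succ n ih =>
    rw [Function.iterate_succ_apply', ih, ← coe_dz, Derivation.map_smul, Derivation.leibniz_pow,
      coe_dz, Dz_X]
    simp only [Nat.factorial_succ, add_tsub_cancel_right, nsmul_eq_mul, smul_eq_mul,
      smul_eq_C_mul, Nat.cast_mul, Nat.cast_succ, map_mul, map_pow, map_neg, map_one, map_add,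
      map_natCast]
    ring

lemma Dz_iterate_eq (n : ℕ) : Dz^[n] = ⇑((dz : ℂ⟦X⟧ →ₗ[ℂ] ℂ⟦X⟧) ^ n) := by
  rw [Module.End.coe_pow, ← coe_dz]; rfl

section Taylor

variable (ψ : ℂ⟦X⟧)

noncomputable def taylorTerm (φ : ℂ⟦X⟧) (n : ℕ) : ℂ⟦X⟧ :=
  (n.factorial : ℂ)⁻¹ • (ψ ^ n * Dz^[n] φ)

lemma X_pow_add_dvd_taylorTerm {k : ℕ} {φ : ℂ⟦X⟧} (h : X ^ k ∣ φ) (n : ℕ) :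
    X ^ (k + n) ∣ taylorTerm ψ φ n := by
  rw [taylorTerm, smul_eq_C_mul]
  exact ((X_pow_add_dvd_Dz_iterate h n).mul_left _).mul_left _

lemma X_pow_dvd_taylorTerm (φ : ℂ⟦X⟧) (n : ℕ) : X ^ n ∣ taylorTerm ψ φ n := by
  have := X_pow_add_dvd_taylorTerm ψ (k := 0) (φ := φ) (by simp) n
  rwa [zero_add] at this

lemma taylorTerm_add (f g : ℂ⟦X⟧) : taylorTerm ψ (f + g) = taylorTerm ψ f + taylorTerm ψ g := by
  funext n
  simp [taylorTerm, Dz_iterate_eq, mul_add]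

lemma taylorTerm_smul (c : ℂ) (f : ℂ⟦X⟧) : taylorTerm ψ (c • f) = c • taylorTerm ψ f := by
  funext n
  simp [taylorTerm, Dz_iterate_eq, smul_comm c]

lemma taylorTerm_one : taylorTerm ψ 1 = Pi.single 0 1 := by
  funext n
  cases n with
  | zero => simp [taylorTerm]
  | succ n => simp [taylorTerm, Function.iterate_succ_apply, ← coe_dz]

lemma taylorTerm_mul (f g : ℂ⟦X⟧) (n : ℕ) :
    taylorTerm ψ (f * g) n =
      ∑ ij ∈ antidiagonal n, taylorTerm ψ f ij.1 * taylorTerm ψ g ij.2 := by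
  simp only [taylorTerm, ← coe_dz, Derivation.iterate_mul, mul_sum, smul_sum]
  refine sum_congr rfl fun ⟨i, j⟩ hij => ?_
  obtain rfl : i + j = n := HasAntidiagonal.mem_antidiagonal.1 hij
  have hchoose : ((i + j).factorial : ℂ)⁻¹ * (i + j).choose i =
      (i.factorial : ℂ)⁻¹ * (j.factorial : ℂ)⁻¹ := by
    have h := Nat.choose_mul_factorial_mul_factorial (Nat.le_add_right i j)
    rw [Nat.add_sub_cancel_left] at h
    have hc : ((i + j).choose i : ℂ) ≠ 0 := by
      exact_mod_cast (Nat.choose_pos (Nat.le_add_right i j)).ne'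
    rw [← h]
    push_cast
    field_simp
  rw [smul_mul_smul_comm, ← hchoose, ← Nat.cast_smul_eq_nsmul ℂ, mul_smul_comm, smul_smul, pow_add]
  ring_nf

noncomputable def taylorAlgHom : ℂ⟦X⟧ →ₐ[ℂ] ℂ⟦X⟧ :=
  AlgHom.ofLinearMap
    { toFun := fun φ => formalSum (taylorTerm ψ φ)
      map_add' := fun f g => by simp only [taylorTerm_add, formalSum_add]
      map_smul' := fun c f => by simp only [taylorTerm_smul, formalSum_smul, RingHom.id_apply] }
    (by simp [taylorTerm_one, formalSum_single])
    (fun f g => by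
      simp only [LinearMap.coe_mk, AddHom.coe_mk]
      rw [formalSum_mul_formalSum (X_pow_dvd_taylorTerm ψ f) (X_pow_dvd_taylorTerm ψ g)]
      exact congrArg formalSum (funext (taylorTerm_mul ψ f g)))

lemma X_pow_dvd_taylorAlgHom (ψ : ℂ⟦X⟧) {k : ℕ} {f : ℂ⟦X⟧} (hf : X ^ k ∣ f) :
    X ^ k ∣ taylorAlgHom ψ f :=
  X_pow_dvd_formalSum fun n => (pow_dvd_pow X (Nat.le_add_right k n)).trans
    (X_pow_add_dvd_taylorTerm ψ hf n)

end Taylor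

/-- `z + ψ` read in the coordinate `X = z⁻¹`: `1 / (z + ψ) = X / (1 + X ψ)`. -/
noncomputable def conjRecip (ψ : ℂ⟦X⟧) : ℂ⟦X⟧ := X * (1 + X * ψ)⁻¹

lemma one_add_X_mul_mul_conjRecip (ψ : ℂ⟦X⟧) : (1 + X * ψ) * conjRecip ψ = X := by
  rw [conjRecip, mul_left_comm, PowerSeries.mul_inv_cancel _ (by simp), mul_one]

lemma eq_conjRecip_iff {ψ w : ℂ⟦X⟧} : w = conjRecip ψ ↔ (1 + X * ψ) * w = X := by
  rw [conjRecip, PowerSeries.eq_mul_inv_iff_mul_eq (by simp), mul_comm]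

lemma conjRecip_injective : Function.Injective conjRecip := fun ψ χ h => by
  have hne : conjRecip ψ ≠ 0 := fun h0 =>
    (X_ne_zero (R := ℂ)) (by simpa [h0] using (one_add_X_mul_mul_conjRecip ψ).symm)
  have h1 := (one_add_X_mul_mul_conjRecip ψ).trans (eq_conjRecip_iff.1 h).symm
  exact mul_left_cancel₀ X_ne_zero (add_left_cancel (mul_right_cancel₀ hne h1))

lemma X_dvd_conjRecip (ψ : ℂ⟦X⟧) : X ∣ conjRecip ψ := dvd_mul_right _ _

lemma constantCoeff_conjRecip (ψ : ℂ⟦X⟧) : constantCoeff (conjRecip ψ) = 0 :=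
  X_dvd_iff.1 (X_dvd_conjRecip ψ)

lemma hasSubst_conjRecip (ψ : ℂ⟦X⟧) : HasSubst (conjRecip ψ) :=
  HasSubst.of_constantCoeff_zero' (constantCoeff_conjRecip ψ)

lemma coeff_one_conjRecip (ψ : ℂ⟦X⟧) : coeff 1 (conjRecip ψ) = 1 := by
  simp [conjRecip, coeff_succ_X_mul]

lemma conjRecip_zero : conjRecip 0 = X := by simp [conjRecip]

lemma exists_conjRecip_eq {w : ℂ⟦X⟧} (h0 : constantCoeff w = 0) (h1 : coeff 1 w = 1) :
    ∃ ψ, conjRecip ψ = w := by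
  obtain ⟨v, rfl⟩ := X_dvd_iff.2 h0
  have hv : constantCoeff v = 1 := by simpa [coeff_succ_X_mul] using h1
  obtain ⟨ψ, hψ⟩ := X_dvd_iff.2 (show constantCoeff (v⁻¹ - 1) = 0 by simp [hv])
  refine ⟨ψ, (eq_conjRecip_iff.2 ?_).symm⟩
  rw [← hψ, add_sub_cancel, mul_left_comm, PowerSeries.inv_mul_cancel _ (by simp [hv]), mul_one]

lemma taylorTerm_X (ψ : ℂ⟦X⟧) (n : ℕ) : taylorTerm ψ X n = X * (-(X * ψ)) ^ n := by
  have hn : (n.factorial : ℂ) ≠ 0 := by exact_mod_cast n.factorial_ne_zero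
  rw [taylorTerm, Dz_iterate_X, mul_smul_comm, smul_smul, mul_left_comm, inv_mul_cancel₀ hn,
    mul_one, smul_eq_C_mul]
  simp only [map_pow, map_neg, map_one]
  ring

theorem taylorAlgHom_X (ψ : ℂ⟦X⟧) : taylorAlgHom ψ X = conjRecip ψ := by
  refine eq_conjRecip_iff.2 ?_
  have h := one_sub_mul_formalSum_mul_pow (dvd_neg.2 (dvd_mul_right X ψ)) X
  rwa [sub_neg_eq_add, ← funext (taylorTerm_X ψ)] at h

theorem taylorAlgHom_eq_substAlgHom (ψ : ℂ⟦X⟧) :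
    taylorAlgHom ψ = substAlgHom (hasSubst_conjRecip ψ) := by
  refine algHom_ext_of_X_pow_dvd (fun k f => X_pow_dvd_taylorAlgHom ψ) (fun k f hf => ?_) ?_
  · rw [coe_substAlgHom]; exact X_pow_dvd_subst (X_dvd_conjRecip ψ) hf
  · rw [taylorAlgHom_X, substAlgHom_X]

lemma compPart_eq_add_subst (φ ψ : ℂ⟦X⟧) : compPart φ ψ = ψ + φ.subst (conjRecip ψ) := by
  rw [← coe_substAlgHom (hasSubst_conjRecip ψ), ← taylorAlgHom_eq_substAlgHom]
  rfl

lemma conjRecip_compPart (φ ψ : ℂ⟦X⟧) :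
    conjRecip (compPart φ ψ) = (conjRecip φ).subst (conjRecip ψ) := by
  refine (eq_conjRecip_iff.2 ?_).symm
  have hφ := congrArg (substAlgHom (R := ℂ) (hasSubst_conjRecip ψ))
    (one_add_X_mul_mul_conjRecip φ)
  simp only [map_mul, map_add, map_one, substAlgHom_X, coe_substAlgHom] at hφ
  rw [compPart_eq_add_subst]
  linear_combination (1 + X * ψ) * hφ - (φ.subst (conjRecip ψ) *
    (conjRecip φ).subst (conjRecip ψ) - 1) * one_add_X_mul_mul_conjRecip ψ

/-- `(z + ℂ[[z⁻¹]], ∘)` is a group: composition (which is well defined via the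
formally convergent series `φ̃ ∘ g̃ = φ̃ + Σ_{n≥1} (1/n!) ψ̃ⁿ (d/dz)ⁿ φ̃`) has
`z` (i.e. `0` as `ℂ[[z⁻¹]]`-part) as a two-sided identity, is associative, and
every element has a two-sided inverse. -/
theorem formal_diffeos_group :
    (∀ φ : PowerSeries ℂ, compPart φ 0 = φ ∧ compPart 0 φ = φ) ∧
    (∀ φ ψ χ : PowerSeries ℂ,
      compPart (compPart φ ψ) χ = compPart φ (compPart ψ χ)) ∧
    (∀ φ : PowerSeries ℂ, ∃ ψ : PowerSeries ℂ,
      compPart φ ψ = 0 ∧ compPart ψ φ = 0) := by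
  refine ⟨fun φ => ⟨conjRecip_injective ?_, conjRecip_injective ?_⟩,
    fun φ ψ χ => conjRecip_injective ?_, fun φ => ?_⟩
  · rw [conjRecip_compPart, conjRecip_zero, X_subst]
  · rw [conjRecip_compPart, conjRecip_zero, subst_X (hasSubst_conjRecip φ)]
  · simp only [conjRecip_compPart,
      subst_comp_subst_apply (hasSubst_conjRecip _) (hasSubst_conjRecip _)]
  · have hunit : IsUnit (coeff 1 (conjRecip φ)) := by simp [coeff_one_conjRecip]
    obtain ⟨ψ, hψ⟩ := exists_conjRecip_eq (constantCoeff_substInvOfIsUnit _ hunit)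
      (by simp [coeff_one_substInvOfIsUnit, coeff_one_conjRecip])
    refine ⟨ψ, conjRecip_injective ?_, conjRecip_injective ?_⟩
    · rw [conjRecip_compPart, conjRecip_zero, hψ,
        subst_substInvOfIsUnit_right _ (constantCoeff_conjRecip φ)]
    · rw [conjRecip_compPart, conjRecip_zero, hψ,
        subst_substInvOfIsUnit_left _ (constantCoeff_conjRecip φ)]
end

section
/- Let τ ∈ ℝ, δ > 0 and let φ̂ be holomorphic on a star-shaped (w.r.t. 0) domain S ⊆ ℂ with |φ̂(ζ)| ≤ C e^{τ|ζ|} on S. Suppose |φ̂₀(ζ)| ≤ A e^{τ₊|ζ|} on S for another holomorphic φ̂₀. Then for every k ≥ 0, the function ((−ζ)^k/k!)·φ̂ convolved with the k-fold convolution power φ̂₀^{*k} satisfies |(((−ζ)^k/k!) φ̂) * φ̂₀^{*k}(ζ)| ≤ C A^k (|ζ|^{2k}/(2k)!) e^{max(τ,τ₊)|ζ|} on S, and hence Σ_{k≥0} |(((−ζ)^k/k!) φ̂) * φ̂₀^{*k}(ζ)| ≤ C e^{(√A + max(τ,τ₊))|ζ|}. -/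
open MeasureTheory intervalIntegral

/-- `convIter f φ₀ k = f * φ₀^{*k}`, the convolution of `f` with the `k`-fold
convolution power of `φ₀` (with `φ₀^{*0}` the convolution unit). -/
noncomputable def convIter (f φ₀ : ℂ → ℂ) : ℕ → ℂ → ℂ
  | 0 => f
  | k + 1 => segConv (convIter f φ₀ k) φ₀

/-!
Each convolution with `φ₀` raises the degree of a bound `M |ζ|^n / n! · e^{σ|ζ|}` by one and
multiplies `M` by `A`: along the segment the exponentials recombine to `e^{σ|ζ|}`, and
`|ζ| ∫₀¹ (t|ζ|)^n / n! dt = |ζ|^{n+1} / (n+1)!`. Starting from `|ζ|^k / k! · C e^{σ|ζ|}` with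
`σ = max τ τ₊`, `k` convolutions give `C A^k |ζ|^{2k} / (2k)! · e^{σ|ζ|}`, and summing over `k`
gives `C e^{σ|ζ|} cosh (√A |ζ|) ≤ C e^{(√A + σ)|ζ|}`.
-/

open Real

theorem Real.cosh_le_exp_abs (x : ℝ) : cosh x ≤ exp |x| := by
  rw [← cosh_abs, cosh_eq]
  have : exp (-|x|) ≤ exp |x| := exp_le_exp.2 (by linarith [abs_nonneg x])
  linarith

theorem tsum_le_mul_exp_abs_of_le_pow_two_mul_div_factorial {a : ℕ → ℝ} {B x : ℝ}
    (ha0 : ∀ k, 0 ≤ a k) (hB : 0 ≤ B) (ha : ∀ k, a k ≤ B * (x ^ (2 * k) / (2 * k).factorial)) :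
    ∑' k, a k ≤ B * exp |x| := by
  have hcosh := (hasSum_cosh x).mul_left B
  calc ∑' k, a k ≤ B * cosh x :=
        (Summable.of_nonneg_of_le ha0 ha hcosh.summable).tsum_le_tsum ha hcosh.summable
          |>.trans_eq hcosh.tsum_eq
    _ ≤ B * exp |x| := mul_le_mul_of_nonneg_left (cosh_le_exp_abs x) hB

theorem norm_segConv_le_of_norm_le_mul_pow {f g : ℂ → ℂ} {ζ : ℂ} {K : ℝ} {n : ℕ}
    (h : ∀ t ∈ Set.Ioc (0:ℝ) 1, ‖f (t * ζ) * g (ζ - t * ζ)‖ ≤ K * t ^ n) :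
    ‖segConv f g ζ‖ ≤ ‖ζ‖ * (K / (n + 1)) := by
  have hint : ‖∫ t in (0:ℝ)..1, f (t * ζ) * g (ζ - t * ζ)‖ ≤ ∫ t in (0:ℝ)..1, K * t ^ n :=
    norm_integral_le_of_norm_le zero_le_one (Filter.Eventually.of_forall h)
      ((continuous_const.mul (continuous_pow n)).intervalIntegrable 0 1)
  rw [intervalIntegral.integral_const_mul, integral_pow] at hint
  rw [segConv, norm_mul]
  refine mul_le_mul_of_nonneg_left (hint.trans_eq ?_) (norm_nonneg _)
  simp [div_eq_mul_inv]

theorem norm_segConv_le_pow_div_factorial_mul_exp {S : Set ℂ}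
    (hstar : ∀ ζ ∈ S, ∀ t : ℝ, t ∈ Set.Icc (0:ℝ) 1 → (t : ℂ) * ζ ∈ S)
    {f g : ℂ → ℂ} {M A σ : ℝ} {n : ℕ}
    (hf : ∀ ξ ∈ S, ‖f ξ‖ ≤ M * (‖ξ‖ ^ n / n.factorial) * exp (σ * ‖ξ‖))
    (hg : ∀ ξ ∈ S, ‖g ξ‖ ≤ A * exp (σ * ‖ξ‖)) :
    ∀ ζ ∈ S, ‖segConv f g ζ‖ ≤ M * A * (‖ζ‖ ^ (n + 1) / (n + 1).factorial) * exp (σ * ‖ζ‖) := by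
  intro ζ hζ
  set K := M * A * (‖ζ‖ ^ n / n.factorial) * exp (σ * ‖ζ‖)
  suffices h : ∀ t ∈ Set.Ioc (0:ℝ) 1, ‖f (t * ζ) * g (ζ - t * ζ)‖ ≤ K * t ^ n by
    refine (norm_segConv_le_of_norm_le_mul_pow h).trans_eq ?_
    simp only [K, Nat.factorial_succ]
    push_cast
    field_simp
    ring
  rintro t ⟨ht0, ht1⟩
  have hsub : ζ - t * ζ = ((1 - t : ℝ) : ℂ) * ζ := by push_cast; ring
  have hfζ := hf _ (hstar ζ hζ t ⟨ht0.le, ht1⟩)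
  have hgζ := hg _ (hstar ζ hζ (1 - t) ⟨by linarith, by linarith⟩)
  rw [norm_mul, Complex.norm_real, norm_of_nonneg ht0.le] at hfζ
  rw [norm_mul, Complex.norm_real, norm_of_nonneg (by linarith : 0 ≤ 1 - t)] at hgζ
  rw [norm_mul, hsub]
  calc ‖f (t * ζ)‖ * ‖g (((1 - t : ℝ) : ℂ) * ζ)‖
      ≤ M * ((t * ‖ζ‖) ^ n / n.factorial) * exp (σ * (t * ‖ζ‖)) * (A * exp (σ * ((1 - t) * ‖ζ‖))) :=
        mul_le_mul hfζ hgζ (norm_nonneg _) ((norm_nonneg _).trans hfζ)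
    _ = K * t ^ n := by
        simp only [K, mul_pow]
        rw [show σ * ‖ζ‖ = σ * (t * ‖ζ‖) + σ * ((1 - t) * ‖ζ‖) by ring, exp_add]
        ring

theorem norm_convIter_le {S : Set ℂ}
    (hstar : ∀ ζ ∈ S, ∀ t : ℝ, t ∈ Set.Icc (0:ℝ) 1 → (t : ℂ) * ζ ∈ S)
    {f g : ℂ → ℂ} {M A σ : ℝ} {n : ℕ}
    (hf : ∀ ξ ∈ S, ‖f ξ‖ ≤ M * (‖ξ‖ ^ n / n.factorial) * exp (σ * ‖ξ‖))
    (hg : ∀ ξ ∈ S, ‖g ξ‖ ≤ A * exp (σ * ‖ξ‖)) (j : ℕ) :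
    ∀ ζ ∈ S, ‖convIter f g j ζ‖ ≤
      M * A ^ j * (‖ζ‖ ^ (n + j) / (n + j).factorial) * exp (σ * ‖ζ‖) := by
  induction j with
  | zero => simpa [convIter] using hf
  | succ j ih =>
    rw [← add_assoc]
    simpa only [convIter, pow_succ, mul_assoc] using
      norm_segConv_le_pow_div_factorial_mul_exp hstar ih hg

theorem norm_neg_pow_div_factorial_mul_le {S : Set ℂ} {φ : ℂ → ℂ} {C σ : ℝ}
    (hφ : ∀ ξ ∈ S, ‖φ ξ‖ ≤ C * exp (σ * ‖ξ‖)) (k : ℕ) :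
    ∀ ξ ∈ S, ‖(-ξ) ^ k / k.factorial * φ ξ‖ ≤ C * (‖ξ‖ ^ k / k.factorial) * exp (σ * ‖ξ‖) := by
  intro ξ hξ
  rw [norm_mul, norm_div, norm_pow, norm_neg, Complex.norm_natCast, mul_comm C, mul_assoc]
  exact mul_le_mul_of_nonneg_left (hφ ξ hξ) (by positivity)

theorem conv_powers_exponential_bound_general (S : Set ℂ)
    (hstar : ∀ ζ ∈ S, ∀ t : ℝ, t ∈ Set.Icc (0:ℝ) 1 → (t : ℂ) * ζ ∈ S)
    (τ τplus C A : ℝ) (hC : 0 ≤ C) (hA : 0 ≤ A)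
    (φ φ₀ : ℂ → ℂ)
    (hφ : ∀ ζ ∈ S, ‖φ ζ‖ ≤ C * Real.exp (τ * ‖ζ‖))
    (hφ₀ : ∀ ζ ∈ S, ‖φ₀ ζ‖ ≤ A * Real.exp (τplus * ‖ζ‖)) :
    ∀ ζ ∈ S,
      (∀ k : ℕ,
        ‖convIter (fun ξ => (-ξ) ^ k / k.factorial * φ ξ) φ₀ k ζ‖ ≤
          C * A ^ k * (‖ζ‖ ^ (2 * k) / (2 * k).factorial) *
            Real.exp (max τ τplus * ‖ζ‖)) ∧
      ∑' k : ℕ, ‖convIter (fun ξ => (-ξ) ^ k / k.factorial * φ ξ) φ₀ k ζ‖ ≤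
        C * Real.exp ((Real.sqrt A + max τ τplus) * ‖ζ‖) := by
  intro ζ hζ
  set σ := max τ τplus
  have hφσ : ∀ ξ ∈ S, ‖φ ξ‖ ≤ C * exp (σ * ‖ξ‖) := fun ξ hξ =>
    (hφ ξ hξ).trans (by gcongr; exact le_max_left _ _)
  have hφ₀σ : ∀ ξ ∈ S, ‖φ₀ ξ‖ ≤ A * exp (σ * ‖ξ‖) := fun ξ hξ =>
    (hφ₀ ξ hξ).trans (by gcongr; exact le_max_right _ _)
  have hterm : ∀ k : ℕ, ‖convIter (fun ξ => (-ξ) ^ k / k.factorial * φ ξ) φ₀ k ζ‖ ≤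
      C * A ^ k * (‖ζ‖ ^ (2 * k) / (2 * k).factorial) * exp (σ * ‖ζ‖) := fun k => by
    simpa [two_mul] using
      norm_convIter_le hstar (norm_neg_pow_div_factorial_mul_le hφσ k) hφ₀σ k ζ hζ
  refine ⟨hterm, ?_⟩
  calc _ ≤ C * exp (σ * ‖ζ‖) * exp |√A * ‖ζ‖| := by
        refine tsum_le_mul_exp_abs_of_le_pow_two_mul_div_factorial (fun _ => norm_nonneg _)
          (by positivity) fun k => (hterm k).trans_eq ?_
        rw [mul_pow, pow_mul √A, sq_sqrt hA]
        ring
    _ = C * exp ((√A + σ) * ‖ζ‖) := by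
        rw [abs_of_nonneg (by positivity), mul_assoc, ← exp_add]
        ring_nf

/-- If `|φ̂(ζ)| ≤ C e^{τ|ζ|}` and `|φ̂₀(ζ)| ≤ A e^{τ₊|ζ|}` on a star-shaped
domain `S`, then `|(((−ζ)^k/k!) φ̂) * φ̂₀^{*k}(ζ)| ≤ C A^k (|ζ|^{2k}/(2k)!)
e^{max(τ,τ₊)|ζ|}` on `S`, and summing over `k`,
`Σ_k |⋯| ≤ C e^{(√A + max(τ,τ₊))|ζ|}`. -/
theorem conv_powers_exponential_bound (S : Set ℂ) (hS : IsOpen S)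
    (hstar : ∀ ζ ∈ S, ∀ t : ℝ, t ∈ Set.Icc (0:ℝ) 1 → (t : ℂ) * ζ ∈ S)
    (τ τplus C A : ℝ) (hC : 0 ≤ C) (hA : 0 ≤ A)
    (φ φ₀ : ℂ → ℂ) (hφd : DifferentiableOn ℂ φ S) (hφ₀d : DifferentiableOn ℂ φ₀ S)
    (hφ : ∀ ζ ∈ S, ‖φ ζ‖ ≤ C * Real.exp (τ * ‖ζ‖))
    (hφ₀ : ∀ ζ ∈ S, ‖φ₀ ζ‖ ≤ A * Real.exp (τplus * ‖ζ‖)) :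
    ∀ ζ ∈ S,
      (∀ k : ℕ,
        ‖convIter (fun ξ => (-ξ) ^ k / k.factorial * φ ξ) φ₀ k ζ‖ ≤
          C * A ^ k * (‖ζ‖ ^ (2 * k) / (2 * k).factorial) *
            Real.exp (max τ τplus * ‖ζ‖)) ∧
      ∑' k : ℕ, ‖convIter (fun ξ => (-ξ) ^ k / k.factorial * φ ξ) φ₀ k ζ‖ ≤
        C * Real.exp ((Real.sqrt A + max τ τplus) * ‖ζ‖) :=
  conv_powers_exponential_bound_general S hstar τ τplus C A hC hA φ φ₀ hφ hφ₀
end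

section
/- Let η : ℂ → [0,∞) be 1-Lipschitz and let γ'(τ) ∈ ℂ with |γ'(τ)| ≤ 1. For ζ = (ζ₁,…,ζₙ), ζ' = (ζ'₁,…,ζ'ₙ) ∈ ℂⁿ and a fixed point γ(τ) ∈ ℂ, define D(ζ) := η(γ(τ) − Σⱼζⱼ) + Σⱼ η(ζⱼ) and assume D > 0 everywhere, and define Xᵢ(ζ) := (η(ζᵢ)/D(ζ)) γ'(τ). Then Σ_{i=1}^n |Xᵢ(ζ') − Xᵢ(ζ)| ≤ (3/D(ζ')) Σ_{i=1}^n |ζ'ᵢ − ζᵢ|. -/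
/-- Lipschitz estimate for the vector field `Xᵢ(ζ) = (η(ζᵢ)/D(ζ)) γ'(τ)` where
`D(ζ) = η(γ(τ) − Σⱼ ζⱼ) + Σⱼ η(ζⱼ)`, with `η : ℂ → [0,∞)` 1-Lipschitz and
`|γ'(τ)| ≤ 1`: `Σᵢ |Xᵢ(ζ') − Xᵢ(ζ)| ≤ (3/D(ζ')) Σᵢ |ζ'ᵢ − ζᵢ|`. -/
theorem vector_field_lipschitz_estimate (n : ℕ) (η : ℂ → ℝ)
    (hη0 : ∀ ξ : ℂ, 0 ≤ η ξ) (hηlip : LipschitzWith 1 η)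
    (p g : ℂ) (hg : ‖g‖ ≤ 1)
    (hD : ∀ ζ : Fin n → ℂ, 0 < η (p - ∑ j, ζ j) + ∑ j, η (ζ j)) :
    ∀ ζ ζ' : Fin n → ℂ,
      ∑ i, ‖(↑(η (ζ' i) / (η (p - ∑ j, ζ' j) + ∑ j, η (ζ' j))) : ℂ) * g -
            (↑(η (ζ i) / (η (p - ∑ j, ζ j) + ∑ j, η (ζ j))) : ℂ) * g‖ ≤
        3 / (η (p - ∑ j, ζ' j) + ∑ j, η (ζ' j)) * ∑ i, ‖ζ' i - ζ i‖ := by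
  intro ζ ζ'
  set D := η (p - ∑ j, ζ j) + ∑ j, η (ζ j) with hDdef
  set D' := η (p - ∑ j, ζ' j) + ∑ j, η (ζ' j) with hD'def
  have hDpos : 0 < D := hD ζ
  have hD'pos : 0 < D' := hD ζ'
  set S := ∑ i, ‖ζ' i - ζ i‖ with hSdef
  have hS0 : 0 ≤ S := Finset.sum_nonneg fun i _ => norm_nonneg _
  have hlip : ∀ a b : ℂ, |η a - η b| ≤ ‖a - b‖ := by
    intro a b
    have := hηlip.dist_le_mul a b
    simpa [Real.dist_eq, dist_eq_norm] using this
  have hDD' : |D' - D| ≤ 2 * S := by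
    have h1 : |η (p - ∑ j, ζ' j) - η (p - ∑ j, ζ j)| ≤ S := by
      calc |η (p - ∑ j, ζ' j) - η (p - ∑ j, ζ j)|
          ≤ ‖(p - ∑ j, ζ' j) - (p - ∑ j, ζ j)‖ := hlip _ _
        _ = ‖(∑ j, ζ j) - ∑ j, ζ' j‖ := by congr 1; ring
        _ = ‖∑ j, (ζ j - ζ' j)‖ := by rw [Finset.sum_sub_distrib]
        _ ≤ ∑ j, ‖ζ j - ζ' j‖ := norm_sum_le _ _
        _ = ∑ j, ‖ζ' j - ζ j‖ := by simp [norm_sub_rev]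
    have h2 : |(∑ j, η (ζ' j)) - ∑ j, η (ζ j)| ≤ S := by
      rw [← Finset.sum_sub_distrib]
      calc |∑ j, (η (ζ' j) - η (ζ j))| ≤ ∑ j, |η (ζ' j) - η (ζ j)| :=
            Finset.abs_sum_le_sum_abs _ _
        _ ≤ ∑ j, ‖ζ' j - ζ j‖ := Finset.sum_le_sum fun j _ => hlip _ _
    have heq : D' - D = (η (p - ∑ j, ζ' j) - η (p - ∑ j, ζ j)) +
        ((∑ j, η (ζ' j)) - ∑ j, η (ζ j)) := by rw [hDdef, hD'def]; ring
    calc |D' - D| ≤ |η (p - ∑ j, ζ' j) - η (p - ∑ j, ζ j)| +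
          |(∑ j, η (ζ' j)) - ∑ j, η (ζ j)| := heq ▸ abs_add_le _ _
      _ ≤ S + S := add_le_add h1 h2
      _ = 2 * S := by ring
  have key : ∀ i, ‖(↑(η (ζ' i) / D') : ℂ) * g - (↑(η (ζ i) / D) : ℂ) * g‖ ≤
      (‖ζ' i - ζ i‖ + 2 * S * (η (ζ i) / D)) / D' := by
    intro i
    have hnorm : ‖(↑(η (ζ' i) / D') : ℂ) * g - (↑(η (ζ i) / D) : ℂ) * g‖
        ≤ |η (ζ' i) / D' - η (ζ i) / D| := by
      rw [← sub_mul, ← Complex.ofReal_sub]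
      calc ‖(↑(η (ζ' i) / D' - η (ζ i) / D) : ℂ) * g‖
          = |η (ζ' i) / D' - η (ζ i) / D| * ‖g‖ := by
            rw [norm_mul, Complex.norm_real, Real.norm_eq_abs]
        _ ≤ |η (ζ' i) / D' - η (ζ i) / D| * 1 :=
            mul_le_mul_of_nonneg_left hg (abs_nonneg _)
        _ = _ := mul_one _
    refine hnorm.trans ?_
    have heq : η (ζ' i) / D' - η (ζ i) / D
        = (η (ζ' i) - η (ζ i) - (D' - D) * (η (ζ i) / D)) / D' := by
      field_simp
      ring
    rw [heq, abs_div, abs_of_pos hD'pos]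
    gcongr
    calc |η (ζ' i) - η (ζ i) - (D' - D) * (η (ζ i) / D)|
        ≤ |η (ζ' i) - η (ζ i)| + |(D' - D) * (η (ζ i) / D)| := abs_sub _ _
      _ ≤ ‖ζ' i - ζ i‖ + 2 * S * (η (ζ i) / D) := by
          refine add_le_add (hlip _ _) ?_
          rw [abs_mul, abs_of_nonneg (div_nonneg (hη0 _) hDpos.le)]
          exact mul_le_mul_of_nonneg_right hDD' (div_nonneg (hη0 _) hDpos.le)
  have hsumη : (∑ i, η (ζ i)) / D ≤ 1 :=
    (div_le_one hDpos).mpr (le_add_of_nonneg_left (hη0 _))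
  calc ∑ i, ‖(↑(η (ζ' i) / D') : ℂ) * g - (↑(η (ζ i) / D) : ℂ) * g‖
      ≤ ∑ i, (‖ζ' i - ζ i‖ + 2 * S * (η (ζ i) / D)) / D' :=
        Finset.sum_le_sum fun i _ => key i
    _ = (S + 2 * S * ((∑ i, η (ζ i)) / D)) / D' := by
        rw [← Finset.sum_div]; congr 1
        rw [Finset.sum_add_distrib, ← hSdef]; congr 1
        rw [← Finset.mul_sum, ← Finset.sum_div]
    _ ≤ (S + 2 * S * 1) / D' := by gcongr
    _ = 3 / D' * S := by ring
end
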